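/- arXiv:1303.7196 — 3 statements merged into one kernel-verified Lean document; each statement's English description precedes it below -/
import Mathlib

section
/- Let ν satisfy the equilibrium relation f(ν(T(x))) = -u(x) - c(x,T(x)) - ∫φ(T(x),T(z))dμ(z) - V(T(x)) where f satisfies the Inada conditions. If osc u ≤ osc c, ∫ν dm = 1 with m(Y) = M, and c, φ, V are bounded, then ν is bounded below by f⁻¹(f(1/M) - 2 osc c - 2 osc φ - osc V) > 0 and above by f⁻¹(f(1/M) + 2 osc c + 2 osc φ + osc V) < ∞. -/
open MeasureTheory

/-!
Write `Δ = 2 osc c + 2 osc φ + osc V`. Comparing the equilibrium relation at two points, each of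
the four terms on its right-hand side moves by at most its oscillation, and `osc u ≤ osc c`; since
`T` is onto, `f ∘ ν` therefore oscillates by at most `Δ` on `Y`. As `∫ ν dm = 1`, the density `ν`
lies below its mean `1 / M` somewhere and above it somewhere, so `f ∘ ν` stays within `Δ` of
`f (1 / M)`. Pulling this back through the increasing bijection `f` gives the two bounds.
-/

/-- Junk unless `g` is bounded: `⨆` and `⨅` of an unbounded family of reals are `0`. -/
noncomputable def osc {ι : Type*} (g : ι → ℝ) : ℝ := (⨆ i, g i) - ⨅ i, g i

lemma sub_le_osc {ι : Type*} {g : ι → ℝ} (hA : BddAbove (Set.range g))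
    (hB : BddBelow (Set.range g)) (i j : ι) : g i - g j ≤ osc g :=
  sub_le_sub (le_ciSup hA i) (ciInf_le hB j)

lemma integral_sub_integral_le_of_forall_sub_le {α : Type*} [MeasurableSpace α] {μ : Measure α}
    [IsProbabilityMeasure μ] {g h : α → ℝ} {C : ℝ} (hg : Integrable g μ) (hh : Integrable h μ)
    (hgh : ∀ a, g a - h a ≤ C) : ∫ a, g a ∂μ - ∫ a, h a ∂μ ≤ C := by
  rw [← integral_sub hg hh]
  calc ∫ a, g a - h a ∂μ ≤ ∫ _, C ∂μ := integral_mono (hg.sub hh) (integrable_const C) hgh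
    _ = C := by simp

lemma equilibrium_potential_sub_le {X Y : Type*} [MeasurableSpace X] {μ : Measure X}
    [IsProbabilityMeasure μ] {c : X → Y → ℝ} {φ : Y → Y → ℝ} {V : Y → ℝ} {u : X → ℝ}
    {T : X → Y} (hφint : ∀ y, Integrable (fun z => φ y (T z)) μ)
    (hcA : BddAbove (Set.range fun p : X × Y => c p.1 p.2))
    (hcB : BddBelow (Set.range fun p : X × Y => c p.1 p.2))
    (hφA : BddAbove (Set.range fun p : Y × Y => φ p.1 p.2))
    (hφB : BddBelow (Set.range fun p : Y × Y => φ p.1 p.2))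
    (hVA : BddAbove (Set.range V)) (hVB : BddBelow (Set.range V))
    (huA : BddAbove (Set.range u)) (huB : BddBelow (Set.range u)) (x x' : X) :
    (-u x - c x (T x) - ∫ z, φ (T x) (T z) ∂μ - V (T x))
        - (-u x' - c x' (T x') - ∫ z, φ (T x') (T z) ∂μ - V (T x')) ≤
      osc u + osc (fun p : X × Y => c p.1 p.2) + osc (fun p : Y × Y => φ p.1 p.2) + osc V := by
  have hu := sub_le_osc huA huB x' x
  have hc := sub_le_osc hcA hcB (x', T x') (x, T x)
  have hV := sub_le_osc hVA hVB (T x') (T x)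
  have hφ := integral_sub_integral_le_of_forall_sub_le (hφint (T x')) (hφint (T x))
    fun z => sub_le_osc hφA hφB (T x', T z) (T x, T z)
  linarith

lemma exists_le_inv_and_exists_inv_le_of_integral_eq_one {Y : Type*} [MeasurableSpace Y]
    {m : Measure Y} [IsFiniteMeasure m] {ν : Y → ℝ} (hνint : ∫ y, ν y ∂m = 1) :
    (∃ y, ν y ≤ (m.real Set.univ)⁻¹) ∧ ∃ y, (m.real Set.univ)⁻¹ ≤ ν y := by
  have hm : m ≠ 0 := by
    rintro rfl
    simp at hνint
  have hν : Integrable ν m := integrable_of_integral_eq_one hνint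
  have hmean : ⨍ y, ν y ∂m = (m.real Set.univ)⁻¹ := by
    rw [average_eq, hνint, smul_eq_mul, mul_one]
  exact ⟨hmean ▸ exists_le_average hm hν, hmean ▸ exists_average_le hm hν⟩

lemma forall_mem_Icc_of_forall_sub_le {α : Type*} {g : α → ℝ} {a Δ : ℝ}
    (hosc : ∀ y y', g y - g y' ≤ Δ) (hlow : ∃ y, g y ≤ a) (hhigh : ∃ y, a ≤ g y) (y : α) :
    g y ∈ Set.Icc (a - Δ) (a + Δ) := by
  obtain ⟨y₁, hy₁⟩ := hlow
  obtain ⟨y₂, hy₂⟩ := hhigh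
  constructor <;> linarith [hosc y y₁, hosc y₂ y]

theorem stmt4_general {X Y : Type*} [MeasurableSpace X] [MeasurableSpace Y]
    (μ : Measure X) [IsProbabilityMeasure μ]
    (m : Measure Y) [IsFiniteMeasure m]
    (M : ℝ) (hM : M = (m Set.univ).toReal)
    (c : X → Y → ℝ) (φ : Y → Y → ℝ) (V : Y → ℝ) (u : X → ℝ) (ν : Y → ℝ)
    (T : X → Y) (hT : Function.Surjective T)
    (f : ℝ → ℝ)
    (hfmono : StrictMonoOn f (Set.Ioi 0))
    (hfbij : Set.BijOn f (Set.Ioi 0) Set.univ)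
    (hνpos : ∀ y, 0 < ν y)
    (hνint : ∫ y, ν y ∂m = 1)
    (hφint : ∀ y, Integrable (fun z => φ y (T z)) μ)
    (hcA : BddAbove (Set.range fun p : X × Y => c p.1 p.2))
    (hcB : BddBelow (Set.range fun p : X × Y => c p.1 p.2))
    (hφA : BddAbove (Set.range fun p : Y × Y => φ p.1 p.2))
    (hφB : BddBelow (Set.range fun p : Y × Y => φ p.1 p.2))
    (hVA : BddAbove (Set.range V)) (hVB : BddBelow (Set.range V))
    (huA : BddAbove (Set.range u)) (huB : BddBelow (Set.range u))
    (hoscu : (⨆ x, u x) - (⨅ x, u x) ≤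
      (⨆ p : X × Y, c p.1 p.2) - (⨅ p : X × Y, c p.1 p.2))
    (hrel : ∀ x, f (ν (T x)) =
      -u x - c x (T x) - (∫ z, φ (T x) (T z) ∂μ) - V (T x)) :
    ∃ νl νu : ℝ, 0 < νl ∧ νl ≤ νu ∧
      f νl = f (1 / M)
        - 2 * ((⨆ p : X × Y, c p.1 p.2) - (⨅ p : X × Y, c p.1 p.2))
        - 2 * ((⨆ p : Y × Y, φ p.1 p.2) - (⨅ p : Y × Y, φ p.1 p.2))
        - ((⨆ y, V y) - (⨅ y, V y)) ∧
      f νu = f (1 / M)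
        + 2 * ((⨆ p : X × Y, c p.1 p.2) - (⨅ p : X × Y, c p.1 p.2))
        + 2 * ((⨆ p : Y × Y, φ p.1 p.2) - (⨅ p : Y × Y, φ p.1 p.2))
        + ((⨆ y, V y) - (⨅ y, V y)) ∧
      ∀ y, νl ≤ ν y ∧ ν y ≤ νu := by
  set Δ := 2 * osc (fun p : X × Y => c p.1 p.2) + 2 * osc (fun p : Y × Y => φ p.1 p.2) + osc V
    with hΔ
  have hosc : ∀ y y', f (ν y) - f (ν y') ≤ Δ := by
    intro y y'
    obtain ⟨x, rfl⟩ := hT y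
    obtain ⟨x', rfl⟩ := hT y'
    rw [hrel, hrel]
    have hoscu' : osc u ≤ osc (fun p : X × Y => c p.1 p.2) := hoscu
    linarith [equilibrium_potential_sub_le hφint hcA hcB hφA hφB hVA hVB huA huB x x',
      sub_le_osc hφA hφB (T x, T x) (T x, T x)]
  have hmean : 1 / M = (m.real Set.univ)⁻¹ := by rw [hM, one_div, measureReal_def]
  obtain ⟨⟨y₁, hy₁⟩, ⟨y₂, hy₂⟩⟩ := exists_le_inv_and_exists_inv_le_of_integral_eq_one hνint
  rw [← hmean] at hy₁ hy₂
  have hM' : 1 / M ∈ Set.Ioi 0 := (hνpos y₁).trans_le hy₁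
  have hbound := forall_mem_Icc_of_forall_sub_le hosc
    ⟨y₁, hfmono.monotoneOn (hνpos y₁) hM' hy₁⟩ ⟨y₂, hfmono.monotoneOn hM' (hνpos y₂) hy₂⟩
  obtain ⟨νl, hνl, hfl⟩ := hfbij.surjOn (Set.mem_univ (f (1 / M) - Δ))
  obtain ⟨νu, hνu, hfu⟩ := hfbij.surjOn (Set.mem_univ (f (1 / M) + Δ))
  have hbetween : ∀ y, νl ≤ ν y ∧ ν y ≤ νu := fun y =>
    ⟨(hfmono.le_iff_le hνl (hνpos y)).mp (hfl ▸ (hbound y).1),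
      (hfmono.le_iff_le (hνpos y) hνu).mp (hfu ▸ (hbound y).2)⟩
  exact ⟨νl, νu, hνl, (hbetween y₁).1.trans (hbetween y₁).2, by rw [hfl, hΔ, osc, osc, osc]; ring,
    by rw [hfu, hΔ, osc, osc, osc]; ring, hbetween⟩

/-- upper and lower bounds on the equilibrium density `ν`.
If `f(ν(T x)) = -u(x) - c(x,T x) - ∫ φ(T x, T z) dμ(z) - V(T x)` with `f`
satisfying the Inada conditions (strictly increasing bijection from `(0,∞)`
onto `ℝ`), `osc u ≤ osc c`, `∫ ν dm = 1`, `m(Y) = M`, and `c, φ, V` bounded,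
then `ν` is bounded below by `f⁻¹(f(1/M) - 2 osc c - 2 osc φ - osc V) > 0`
and above by `f⁻¹(f(1/M) + 2 osc c + 2 osc φ + osc V) < ∞`. -/
theorem stmt4 {X Y : Type*} [MeasurableSpace X] [MeasurableSpace Y]
    [Nonempty X] [Nonempty Y]
    (μ : Measure X) [IsProbabilityMeasure μ]
    (m : Measure Y) [IsFiniteMeasure m]
    (M : ℝ) (hM : M = (m Set.univ).toReal) (hMpos : 0 < M)
    (c : X → Y → ℝ) (φ : Y → Y → ℝ) (V : Y → ℝ) (u : X → ℝ) (ν : Y → ℝ)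
    (T : X → Y) (hT : Function.Surjective T)
    (f : ℝ → ℝ)
    (hfmono : StrictMonoOn f (Set.Ioi 0))
    (hfbij : Set.BijOn f (Set.Ioi 0) Set.univ)
    (hνpos : ∀ y, 0 < ν y)
    (hνint : ∫ y, ν y ∂m = 1)
    (hφint : ∀ y, Integrable (fun z => φ y (T z)) μ)
    (hcA : BddAbove (Set.range fun p : X × Y => c p.1 p.2))
    (hcB : BddBelow (Set.range fun p : X × Y => c p.1 p.2))
    (hφA : BddAbove (Set.range fun p : Y × Y => φ p.1 p.2))
    (hφB : BddBelow (Set.range fun p : Y × Y => φ p.1 p.2))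
    (hVA : BddAbove (Set.range V)) (hVB : BddBelow (Set.range V))
    (huA : BddAbove (Set.range u)) (huB : BddBelow (Set.range u))
    (hoscu : (⨆ x, u x) - (⨅ x, u x) ≤
      (⨆ p : X × Y, c p.1 p.2) - (⨅ p : X × Y, c p.1 p.2))
    (hrel : ∀ x, f (ν (T x)) =
      -u x - c x (T x) - (∫ z, φ (T x) (T z) ∂μ) - V (T x)) :
    ∃ νl νu : ℝ, 0 < νl ∧ νl ≤ νu ∧
      f νl = f (1 / M)
        - 2 * ((⨆ p : X × Y, c p.1 p.2) - (⨅ p : X × Y, c p.1 p.2))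
        - 2 * ((⨆ p : Y × Y, φ p.1 p.2) - (⨅ p : Y × Y, φ p.1 p.2))
        - ((⨆ y, V y) - (⨅ y, V y)) ∧
      f νu = f (1 / M)
        + 2 * ((⨆ p : X × Y, c p.1 p.2) - (⨅ p : X × Y, c p.1 p.2))
        + 2 * ((⨆ p : Y × Y, φ p.1 p.2) - (⨅ p : Y × Y, φ p.1 p.2))
        + ((⨆ y, V y) - (⨅ y, V y)) ∧
      ∀ y, νl ≤ ν y ∧ ν y ≤ νu :=
  stmt4_general μ m M hM c φ V u ν T hT f hfmono hfbij hνpos hνint hφint hcA hcB hφA hφB hVA hVB huA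
    huB hoscu hrel
end

section
/- Let H be a real Hilbert space, A a (possibly unbounded, densely defined) linear operator with ⟨Aη, η⟩ ≤ 0 and ⟨Aη,η⟩ = 0 only if Aη = 0 and η is constant-zero in the quotient (i.e., ⟨Aη,η⟩ = -∫|∇η|² < 0 for nonconstant η), h a multiplication operator by a function with 0 < h ≤ h_max, and J a bounded operator with h_max · ‖J‖ < 1 so that I - hJ is invertible. Then the operator L = (I - hJ)(A - (I - hJ)⁻¹ h) has kernel equal to the kernel of A - (I-hJ)⁻¹h, and any η in this kernel with ⟨Aη, η⟩ < 0 leads to a contradiction; hence if ⟨Aη,η⟩ < 0 for all nonzero η in the domain, then L has trivial kernel. -/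
/-! If `A η = h η + h J A η`, applying `h⁻¹` gives `η = h⁻¹ A η - J A η`, hence
`⟪A η, η⟫ = ⟪h⁻¹ ω, ω⟫ - ⟪J ω, ω⟫` with `ω = A η`. The coercivity bound
`⟪h⁻¹ ω, ω⟫ ≥ ‖ω‖² / h_max` dominates `⟪J ω, ω⟫ ≤ ‖J‖ ‖ω‖²` because `h_max ‖J‖ < 1`,
so `⟪A η, η⟫ ≥ 0`, which forces `η = 0`. -/

open scoped RealInnerProductSpace

theorem Function.LeftInverse.eq_apply_sub_of_sub_sub_eq_zero {M F : Type*} [AddCommGroup M]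
    [FunLike F M M] [AddMonoidHomClass F M M] {f g : F} (hgf : Function.LeftInverse g f)
    {x y z : M} (hxyz : y - f x - f z = 0) : x = g y - z := by
  have hy : y = f (x + z) := by
    rw [map_add, ← sub_eq_zero, ← hxyz]
    abel
  rw [hy, hgf, add_sub_cancel_right]

section

variable {E : Type*} [NormedAddCommGroup E] [InnerProductSpace ℝ E]

theorem ContinuousLinearMap.real_inner_map_self_le_opNorm_mul_sq (T : E →L[ℝ] E) (x : E) :
    ⟪T x, x⟫ ≤ ‖T‖ * ‖x‖ ^ 2 :=
  calc ⟪T x, x⟫ ≤ ‖T x‖ * ‖x‖ := real_inner_le_norm _ _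
    _ ≤ ‖T‖ * ‖x‖ * ‖x‖ := by gcongr; exact T.le_opNorm x
    _ = ‖T‖ * ‖x‖ ^ 2 := by ring

theorem real_inner_sub_map_self_nonneg {S : E → E} (J : E →L[ℝ] E) {c : ℝ} (hc : 0 < c)
    (hS : ∀ x, ‖x‖ ^ 2 / c ≤ ⟪S x, x⟫) (hJ : c * ‖J‖ < 1) (x : E) :
    0 ≤ ⟪S x - J x, x⟫ := by
  have hJx : ‖J‖ * ‖x‖ ^ 2 ≤ ‖x‖ ^ 2 / c := by
    rw [le_div_iff₀ hc]
    nlinarith [sq_nonneg ‖x‖]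
  rw [inner_sub_left]
  linarith [hS x, J.real_inner_map_self_le_opNorm_mul_sq x]

end

theorem stmt8_general {H : Type*} [NormedAddCommGroup H] [InnerProductSpace ℝ H]
    (A : H →ₗ[ℝ] H)
    (hA : ∀ η : H, η ≠ 0 → (inner ℝ (A η) η : ℝ) < 0)
    (hop J hinv : H →L[ℝ] H)
    (hmax : ℝ) (hmaxpos : 0 < hmax)
    (hinv2 : hinv * hop = 1)
    (hinvbound : ∀ ω : H, ‖ω‖ ^ 2 / hmax ≤ (inner ℝ (hinv ω) ω : ℝ))
    (hJ : hmax * ‖J‖ < 1) :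
    ∀ η : H, A η - hop η - hop (J (A η)) = 0 → η = 0 := by
  intro η hη
  by_contra hne
  have hleft : Function.LeftInverse hinv hop := fun x => congr($hinv2 x)
  have hsolve : η = hinv (A η) - J (A η) := hleft.eq_apply_sub_of_sub_sub_eq_zero hη
  have hnonneg := real_inner_sub_map_self_nonneg J hmaxpos hinvbound hJ (A η)
  rw [← hsolve, real_inner_comm] at hnonneg
  exact (hA η hne).not_ge hnonneg

/-- let `H` be a real Hilbert space, `A` a linear operator with
`⟨Aη, η⟩ < 0` for all nonzero `η`, `h` a positive "multiplication" operator
bounded by `h_max` and satisfying `⟨h⁻¹ω, ω⟩ ≥ ‖ω‖²/h_max`, and `J` a bounded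
operator with `h_max‖J‖ < 1` (so `I - hJ` is invertible).  Then the operator
`L = A - h - hJA = (I - hJ)(A - (I - hJ)⁻¹h)` has trivial kernel. -/
theorem stmt8 {H : Type*} [NormedAddCommGroup H] [InnerProductSpace ℝ H]
    [CompleteSpace H]
    (A : H →ₗ[ℝ] H)
    (hA : ∀ η : H, η ≠ 0 → (inner ℝ (A η) η : ℝ) < 0)
    (hop J hinv : H →L[ℝ] H)
    (hmax : ℝ) (hmaxpos : 0 < hmax)
    (hopnorm : ‖hop‖ ≤ hmax)
    (hinv1 : hop * hinv = 1) (hinv2 : hinv * hop = 1)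
    (hinvbound : ∀ ω : H, ‖ω‖ ^ 2 / hmax ≤ (inner ℝ (hinv ω) ω : ℝ))
    (hJ : hmax * ‖J‖ < 1) :
    ∀ η : H, A η - hop η - hop (J (A η)) = 0 → η = 0 :=
  stmt8_general A hA hop J hinv hmax hmaxpos hinv2 hinvbound hJ
end

section
/- Suppose ν, T satisfy f(ν(T(x))) = G(x, T(x)) for all x, where G(x,y) = -u(x) - c(x,y) - Ψ(y), T is differentiable with invertible differential, and -u_i(x) - c_i(x,T(x)) = 0 (the first-order transport identity). Then the derivative of ν in target coordinates satisfies ν_s(T(x)) = (f⁻¹)'(G) · ( -c_s(x,T(x)) - Ψ_s(T(x)) ), which is bounded by a constant depending only on f, c, Ψ and the bounds on ν, but not on derivatives of u or T. -/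
/-!
Differentiate `f (ν (T x)) = -u x - c x (T x) - Ψ (T x)` in `x`. By the chain rule both sides are
linear maps precomposed with `DT x`, except for the terms `-Du(x) - ∂ₓc(x, T x)`, which vanish by
the first-order transport identity. This leaves
`(f'(ν (T x)) • Dν(T x)) ∘ DT x = -(∂_y c(x, T x) + DΨ(T x)) ∘ DT x`,
and `DT x` is surjective, so it can be cancelled.
-/

open ContinuousLinearMap

variable {𝕜 E F G : Type*} [NontriviallyNormedField 𝕜]
  [NormedAddCommGroup E] [NormedSpace 𝕜 E] [NormedAddCommGroup F] [NormedSpace 𝕜 F]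
  [NormedAddCommGroup G] [NormedSpace 𝕜 G]

theorem ContinuousLinearMap.cancel_right {A B : F →L[𝕜] G} {D : E →L[𝕜] F}
    (hD : Function.Surjective D) : A.comp D = B.comp D ↔ A = B :=
  ⟨fun h => ext fun y => by obtain ⟨x, rfl⟩ := hD y; exact congr($h x), fun h => h ▸ rfl⟩

theorem hasFDerivAt_comp_graph {c : E → F → G} {T : E → F} {T' : E →L[𝕜] F} {x : E}
    (hc : DifferentiableAt 𝕜 (fun p : E × F => c p.1 p.2) (x, T x)) (hT : HasFDerivAt T T' x) :
    HasFDerivAt (fun x' => c x' (T x'))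
      (fderiv 𝕜 (fun x' => c x' (T x)) x + (fderiv 𝕜 (fun y => c x y) (T x)).comp T') x := by
  set L := fderiv 𝕜 (fun p : E × F => c p.1 p.2) (x, T x)
  have hL : HasFDerivAt (fun p : E × F => c p.1 p.2) L (x, T x) := hc.hasFDerivAt
  have hx : fderiv 𝕜 (fun x' => c x' (T x)) x = L.comp (inl 𝕜 E F) :=
    (hL.comp x (hasFDerivAt_prodMk_left (𝕜 := 𝕜) x (T x)) :).fderiv
  have hy : fderiv 𝕜 (fun y => c x y) (T x) = L.comp (inr 𝕜 E F) :=
    (hL.comp (T x) (hasFDerivAt_prodMk_right (𝕜 := 𝕜) x (T x)) :).fderiv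
  rw [hx, hy]
  refine (hL.comp x ((hasFDerivAt_id x).prodMk hT)).congr_fderiv ?_
  ext v
  exact (comp_inl_add_comp_inr L (v, T' v)).symm

/-- first derivative of the equilibrium density in target
coordinates.  If `f(ν(T x)) = -u(x) - c(x, T x) - Ψ(T x)` for all `x`, `T`
has invertible differential, and the first-order transport identity
`Du(x) + D_x c(x, T x) = 0` holds, then
`f'(ν(T x)) • Dν(T x) = -(D_y c(x, T x) + DΨ(T x))`,
i.e. `ν_s(T x) = (f⁻¹)'(G) (-c_s(x,T x) - Ψ_s(T x))`, an expression not
involving derivatives of `u` or `T`. -/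
theorem stmt11 {n : ℕ}
    (u : EuclideanSpace ℝ (Fin n) → ℝ)
    (c : EuclideanSpace ℝ (Fin n) → EuclideanSpace ℝ (Fin n) → ℝ)
    (Ψ : EuclideanSpace ℝ (Fin n) → ℝ)
    (T : EuclideanSpace ℝ (Fin n) → EuclideanSpace ℝ (Fin n))
    (ν : EuclideanSpace ℝ (Fin n) → ℝ)
    (f : ℝ → ℝ)
    (hu : Differentiable ℝ u)
    (hc : Differentiable ℝ fun p : EuclideanSpace ℝ (Fin n) × EuclideanSpace ℝ (Fin n) =>
      c p.1 p.2)
    (hΨ : Differentiable ℝ Ψ)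
    (hT : Differentiable ℝ T)
    (hν : Differentiable ℝ ν)
    (hf : Differentiable ℝ f)
    (hTinv : ∀ x, Function.Bijective (fderiv ℝ T x))
    (hfo : ∀ x, fderiv ℝ u x + fderiv ℝ (fun x' => c x' (T x)) x = 0)
    (hrel : ∀ x, f (ν (T x)) = -u x - c x (T x) - Ψ (T x)) :
    ∀ x, deriv f (ν (T x)) • fderiv ℝ ν (T x)
      = -(fderiv ℝ (fun y => c x y) (T x) + fderiv ℝ Ψ (T x)) := by
  intro x
  set DT := fderiv ℝ T x
  have hT' : HasFDerivAt T DT x := (hT x).hasFDerivAt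
  have hlhs : HasFDerivAt (fun x' => f (ν (T x')))
      (deriv f (ν (T x)) • (fderiv ℝ ν (T x)).comp DT) x :=
    (hf _).hasDerivAt.comp_hasFDerivAt x ((hν _).hasFDerivAt.comp x hT')
  have hrhs : HasFDerivAt (fun x' => -u x' - c x' (T x') - Ψ (T x'))
      (-fderiv ℝ u x
        - (fderiv ℝ (fun x' => c x' (T x)) x + (fderiv ℝ (fun y => c x y) (T x)).comp DT)
        - (fderiv ℝ Ψ (T x)).comp DT) x :=
    ((hu x).hasFDerivAt.neg.sub (hasFDerivAt_comp_graph (hc _) hT')).sub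
      ((hΨ _).hasFDerivAt.comp x hT')
  have hderiv := (funext hrel ▸ hlhs).unique hrhs
  rw [eq_neg_of_add_eq_zero_left (hfo x)] at hderiv
  refine (cancel_right (hTinv x).2).1 ?_
  rw [smul_comp, hderiv, neg_comp, add_comp]
  abel
end
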